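/- Fix n ≥ 1 and strategies (σ,μ,τ), let T be uniformly distributed on {1,…,n} and independent of (U^n,M_1,M_2,V^n) ~ P^{σμτ}, and set U = U_T, W_1 = (M_1,T), W_2 = (M_2,T), V = V_T. Then the joint law of (U,W_1,W_2,V) factorizes as P^{σμτ}_{U W_1 W_2 V} = P_U · P^σ_{W_1|U} · P^μ_{W_2|W_1} · P^τ_{V|W_2}; i.e., for every (u,w_1,w_2,v) for which the conditional probabilities are defined, P(u,w_1,w_2,v) = P_U(u) · P(w_1|u) · P(w_2|w_1) · P(v|w_2), where the conditionals are those induced by the joint law itself. -/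

import Mathlib

/-!
Strategic communication via a cascade multiple-description network
(Bou Rouphael & Le Treust).

STATEMENT 7: factorization of the induced single-letter law.
-/

open Finset Filter

/-- A probability distribution on a finite alphabet. -/
structure FDist (α : Type) [Fintype α] where
  p : α → ℝ
  nonneg : ∀ a, 0 ≤ p a
  sum_one : ∑ a, p a = 1

/-- The message alphabet `{1, …, 2^⌊nR⌋}`. -/
abbrev Msg (n : ℕ) (R : ℝ) : Type := Fin (2 ^ ⌊(n : ℝ) * R⌋₊)

section NLetter

variable {U V : Type} [Fintype U] [Fintype V]

/-- The joint law `P^{σμτ}(uⁿ, m₁, m₂, vⁿ)` induced by the source and the strategies. -/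
noncomputable def jointN {n : ℕ} {R1 R2 : ℝ} (PU : FDist U)
    (σ : (Fin n → U) → FDist (Msg n R1))
    (μ : Msg n R1 → FDist (Msg n R2))
    (τ : Msg n R2 → FDist (Fin n → V))
    (un : Fin n → U) (m1 : Msg n R1) (m2 : Msg n R2) (vn : Fin n → V) : ℝ :=
  (∏ t, PU.p (un t)) * (σ un).p m1 * (μ m1).p m2 * (τ m2).p vn

/-- The long-run cost `cⁿ(σ,μ,τ) = E[(1/n) ∑_t c(U_t, V_t)]`. -/
noncomputable def costN {n : ℕ} {R1 R2 : ℝ} (PU : FDist U)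
    (σ : (Fin n → U) → FDist (Msg n R1))
    (μ : Msg n R1 → FDist (Msg n R2))
    (τ : Msg n R2 → FDist (Fin n → V))
    (c : U → V → ℝ) : ℝ :=
  ∑ un : Fin n → U, ∑ m1 : Msg n R1, ∑ m2 : Msg n R2, ∑ vn : Fin n → V,
    jointN PU σ μ τ un m1 m2 vn * ((n : ℝ)⁻¹ * ∑ t, c (un t) (vn t))

/-- Best-response set `𝔸₃(σ,μ)` of the decoder. -/
noncomputable def A3 {n : ℕ} {R1 R2 : ℝ} (PU : FDist U) (c3 : U → V → ℝ)
    (σ : (Fin n → U) → FDist (Msg n R1))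
    (μ : Msg n R1 → FDist (Msg n R2)) :
    Set (Msg n R2 → FDist (Fin n → V)) :=
  {τ | ∀ τ', costN PU σ μ τ c3 ≤ costN PU σ μ τ' c3}

/-- Best-response set `𝔸₂(σ)` of the relay (pairs `(μ,τ)` with `τ ∈ 𝔸₃(σ,μ)`
minimizing the relay cost). -/
noncomputable def A2 {n : ℕ} {R1 R2 : ℝ} (PU : FDist U) (c2 c3 : U → V → ℝ)
    (σ : (Fin n → U) → FDist (Msg n R1)) :
    Set ((Msg n R1 → FDist (Msg n R2)) × (Msg n R2 → FDist (Fin n → V))) :=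
  {mt | mt.2 ∈ A3 PU c3 σ mt.1 ∧
    ∀ mt' : (Msg n R1 → FDist (Msg n R2)) × (Msg n R2 → FDist (Fin n → V)),
      mt'.2 ∈ A3 PU c3 σ mt'.1 →
        costN PU σ mt.1 mt.2 c2 ≤ costN PU σ mt'.1 mt'.2 c2}

/-- The encoder's n-letter optimal cost
`Γₑⁿ(R₁,R₂) = inf_σ max_{(μ,τ) ∈ 𝔸₂(σ)} c₁ⁿ(σ,μ,τ)`. -/
noncomputable def GammaN (PU : FDist U) (c1 c2 c3 : U → V → ℝ)
    (n : ℕ) (R1 R2 : ℝ) : ℝ :=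
  sInf {x | ∃ σ : (Fin n → U) → FDist (Msg n R1),
    x = sSup ((fun mt => costN PU σ mt.1 mt.2 c1) '' A2 (R2 := R2) PU c2 c3 σ)}

end NLetter


section SingleLetterization

variable {U V : Type} [Fintype U] [DecidableEq U] [Fintype V] [DecidableEq V]
variable {n : ℕ} {R1 R2 : ℝ}

/-- The induced single-letter joint law `P^{σμτ}_{U W₁ W₂ V}` of
`U = U_T`, `W₁ = (M₁,T)`, `W₂ = (M₂,T)`, `V = V_T`, where `T` is uniform on
`{1,…,n}` and independent of `(Uⁿ,M₁,M₂,Vⁿ) ∼ P^{σμτ}`. -/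
noncomputable def jointSL (PU : FDist U)
    (σ : (Fin n → U) → FDist (Msg n R1))
    (μ : Msg n R1 → FDist (Msg n R2))
    (τ : Msg n R2 → FDist (Fin n → V))
    (u : U) (w1 : Msg n R1 × Fin n) (w2 : Msg n R2 × Fin n) (v : V) : ℝ :=
  ∑ un : Fin n → U, ∑ vn : Fin n → V,
    if w2.2 = w1.2 ∧ un w1.2 = u ∧ vn w1.2 = v
    then (n : ℝ)⁻¹ * jointN PU σ μ τ un w1.1 w2.1 vn else 0

variable (PU : FDist U)
    (σ : (Fin n → U) → FDist (Msg n R1))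
    (μ : Msg n R1 → FDist (Msg n R2))
    (τ : Msg n R2 → FDist (Fin n → V))

/-- Marginal of `P^{σμτ}_{U W₁ W₂ V}` on `U`. -/
noncomputable def margU (u : U) : ℝ :=
  ∑ w1, ∑ w2, ∑ v, jointSL PU σ μ τ u w1 w2 v

/-- Marginal of `P^{σμτ}_{U W₁ W₂ V}` on `W₁`. -/
noncomputable def margW1 (w1 : Msg n R1 × Fin n) : ℝ :=
  ∑ u, ∑ w2, ∑ v, jointSL PU σ μ τ u w1 w2 v

/-- Marginal of `P^{σμτ}_{U W₁ W₂ V}` on `W₂`. -/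
noncomputable def margW2 (w2 : Msg n R2 × Fin n) : ℝ :=
  ∑ u, ∑ w1, ∑ v, jointSL PU σ μ τ u w1 w2 v

/-- Marginal of `P^{σμτ}_{U W₁ W₂ V}` on `(U,W₁)`. -/
noncomputable def margUW1 (u : U) (w1 : Msg n R1 × Fin n) : ℝ :=
  ∑ w2, ∑ v, jointSL PU σ μ τ u w1 w2 v

/-- Marginal of `P^{σμτ}_{U W₁ W₂ V}` on `(W₁,W₂)`. -/
noncomputable def margW1W2 (w1 : Msg n R1 × Fin n) (w2 : Msg n R2 × Fin n) : ℝ :=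
  ∑ u, ∑ v, jointSL PU σ μ τ u w1 w2 v

/-- Marginal of `P^{σμτ}_{U W₁ W₂ V}` on `(W₂,V)`. -/
noncomputable def margW2V (w2 : Msg n R2 × Fin n) (v : V) : ℝ :=
  ∑ u, ∑ w1, jointSL PU σ μ τ u w1 w2 v

/-- Marginal of `P^{σμτ}_{U W₁ W₂ V}` on `(U,W₁,W₂)`. -/
noncomputable def margUW1W2 (u : U) (w1 : Msg n R1 × Fin n)
    (w2 : Msg n R2 × Fin n) : ℝ :=
  ∑ v, jointSL PU σ μ τ u w1 w2 v

/-- Marginal of `P^{σμτ}_{U W₁ W₂ V}` on `(W₁,W₂,V)`. -/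
noncomputable def margW1W2V (w1 : Msg n R1 × Fin n) (w2 : Msg n R2 × Fin n)
    (v : V) : ℝ :=
  ∑ u, jointSL PU σ μ τ u w1 w2 v

end SingleLetterization

/-!
Given the time index `T = t`, the single-letter variables form the Markov chain
`U_t — (M₁,t) — (M₂,t) — V_t`: the law of `(U, W₁, W₂, V)` is
`n⁻¹ · P(U_t = u, M₁ = m₁) · [t' = t] μ(m₂|m₁) · P(V_t = v | M₂ = m₂)`.
A law of the form `a(u,w₁) k(w₁,w₂) l(w₂,v)` with stochastic kernels `k`, `l` factorizes
through its own conditionals, and its `U`-marginal is `P_U` because the source is i.i.d.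
-/

section MarkovChain

variable {α β γ δ K : Type*}

def chainLaw [Mul K] (a : α → β → K) (k : β → γ → K) (l : γ → δ → K)
    (x : α) (b : β) (c : γ) (d : δ) : K :=
  a x b * k b c * l c d

variable [CommSemiring K] {a : α → β → K} {k : β → γ → K} {l : γ → δ → K}

theorem chainLaw_marginal₁₂ [Fintype γ] [Fintype δ] (hk : ∀ b, ∑ c, k b c = 1)
    (hl : ∀ c, ∑ d, l c d = 1) (x : α) (b : β) :
    ∑ c, ∑ d, chainLaw a k l x b c d = a x b := by
  simp only [chainLaw, ← mul_sum, hl, mul_one, hk]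

theorem chainLaw_marginal₁ [Fintype β] [Fintype γ] [Fintype δ] (hk : ∀ b, ∑ c, k b c = 1)
    (hl : ∀ c, ∑ d, l c d = 1) (x : α) :
    ∑ b, ∑ c, ∑ d, chainLaw a k l x b c d = ∑ b, a x b := by
  simp only [chainLaw_marginal₁₂ hk hl]

theorem chainLaw_marginal₂₃ [Fintype α] [Fintype δ] (hl : ∀ c, ∑ d, l c d = 1)
    (b : β) (c : γ) :
    ∑ x, ∑ d, chainLaw a k l x b c d = (∑ x, a x b) * k b c := by
  simp only [chainLaw, ← mul_sum, hl, mul_one, sum_mul]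

theorem chainLaw_marginal₂ [Fintype α] [Fintype γ] [Fintype δ] (hk : ∀ b, ∑ c, k b c = 1)
    (hl : ∀ c, ∑ d, l c d = 1) (b : β) :
    ∑ x, ∑ c, ∑ d, chainLaw a k l x b c d = ∑ x, a x b := by
  simp only [chainLaw_marginal₁₂ hk hl]

theorem chainLaw_marginal₃₄ [Fintype α] [Fintype β] (c : γ) (d : δ) :
    ∑ x, ∑ b, chainLaw a k l x b c d = (∑ x, ∑ b, a x b * k b c) * l c d := by
  simp only [chainLaw, sum_mul]

theorem chainLaw_marginal₃ [Fintype α] [Fintype β] [Fintype δ] (hl : ∀ c, ∑ d, l c d = 1)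
    (c : γ) :
    ∑ x, ∑ b, ∑ d, chainLaw a k l x b c d = ∑ x, ∑ b, a x b * k b c := by
  simp only [chainLaw, ← mul_sum, hl, mul_one]

end MarkovChain

theorem chainLaw_eq_marginal_mul_cond {α β γ δ K : Type*} [Fintype α] [Fintype β] [Fintype γ]
    [Fintype δ] [Field K] {a : α → β → K} {k : β → γ → K} {l : γ → δ → K}
    (hk : ∀ b, ∑ c, k b c = 1) (hl : ∀ c, ∑ d, l c d = 1) (x : α) (b : β) (c : γ) (d : δ)
    (hx : ∑ b, ∑ c, ∑ d, chainLaw a k l x b c d ≠ 0)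
    (hb : ∑ x, ∑ c, ∑ d, chainLaw a k l x b c d ≠ 0)
    (hc : ∑ x, ∑ b, ∑ d, chainLaw a k l x b c d ≠ 0) :
    chainLaw a k l x b c d
      = (∑ b, ∑ c, ∑ d, chainLaw a k l x b c d)
          * ((∑ c, ∑ d, chainLaw a k l x b c d) / ∑ b, ∑ c, ∑ d, chainLaw a k l x b c d)
          * ((∑ x, ∑ d, chainLaw a k l x b c d) / ∑ x, ∑ c, ∑ d, chainLaw a k l x b c d)
          * ((∑ x, ∑ b, chainLaw a k l x b c d) / ∑ x, ∑ b, ∑ d, chainLaw a k l x b c d) := by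
  rw [chainLaw_marginal₁ hk hl] at hx ⊢
  rw [chainLaw_marginal₂ hk hl] at hb ⊢
  rw [chainLaw_marginal₃ hl] at hc ⊢
  rw [chainLaw_marginal₁₂ hk hl, chainLaw_marginal₂₃ hl, chainLaw_marginal₃₄, chainLaw]
  field_simp

theorem sum_ite_apply_eq_prod {ι α R : Type*} [Fintype ι] [DecidableEq ι] [Fintype α]
    [DecidableEq α] [CommSemiring R] {p : α → R} (hp : ∑ y, p y = 1) (i : ι) (a : α) :
    ∑ x : ι → α, (if x i = a then ∏ j, p (x j) else 0) = p a := by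
  -- both sides equal `∏ j, ∑ y, q j y` with `q` the factor `p` cut down to `{a}` at `i`
  let q : ι → α → R := fun j y => if j = i then (if y = a then p y else 0) else p y
  have hprod (x : ι → α) : (if x i = a then ∏ j, p (x j) else 0) = ∏ j, q j (x j) := by
    split_ifs with hx
    · exact prod_congr rfl fun j _ => by by_cases hj : j = i <;> simp [q, hj, hx]
    · exact (prod_eq_zero (mem_univ i) (by simp [q, hx])).symm
  have hsum (j : ι) : ∑ y, q j y = if j = i then p a else 1 := by
    by_cases hj : j = i <;> simp [q, hj, hp]
  simp only [hprod, ← Fintype.prod_sum, hsum, prod_ite_eq', mem_univ, if_true]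

section Cascade

variable {U V : Type} [Fintype U] [DecidableEq U] [Fintype V] [DecidableEq V]
  {n : ℕ} {R1 R2 : ℝ}

/-- `P(U_t = u, M₁ = m₁)`. -/
noncomputable def encoderLetterLaw (PU : FDist U) (σ : (Fin n → U) → FDist (Msg n R1))
    (t : Fin n) (u : U) (m1 : Msg n R1) : ℝ :=
  ∑ un : Fin n → U, if un t = u then (∏ s, PU.p (un s)) * (σ un).p m1 else 0

def relayKernel (μ : Msg n R1 → FDist (Msg n R2)) (w1 : Msg n R1 × Fin n)
    (w2 : Msg n R2 × Fin n) : ℝ :=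
  if w2.2 = w1.2 then (μ w1.1).p w2.1 else 0

/-- `P(V_t = v | M₂ = m₂)`. -/
def decoderLetterKernel (τ : Msg n R2 → FDist (Fin n → V)) (t : Fin n) (m2 : Msg n R2)
    (v : V) : ℝ :=
  ∑ vn : Fin n → V, if vn t = v then (τ m2).p vn else 0

theorem sum_encoderLetterLaw (PU : FDist U) (σ : (Fin n → U) → FDist (Msg n R1))
    (t : Fin n) (u : U) :
    ∑ m1, encoderLetterLaw PU σ t u m1 = PU.p u := by
  simp only [encoderLetterLaw]
  rw [sum_comm]
  simp only [← sum_ite_apply_eq_prod PU.sum_one t u]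
  refine sum_congr rfl fun un _ => ?_
  split_ifs <;> simp [← mul_sum, (σ un).sum_one]

theorem sum_relayKernel (μ : Msg n R1 → FDist (Msg n R2)) (w1 : Msg n R1 × Fin n) :
    ∑ w2, relayKernel μ w1 w2 = 1 := by
  simp [relayKernel, Fintype.sum_prod_type, (μ w1.1).sum_one]

theorem sum_decoderLetterKernel (τ : Msg n R2 → FDist (Fin n → V)) (t : Fin n)
    (m2 : Msg n R2) :
    ∑ v, decoderLetterKernel τ t m2 v = 1 := by
  simp only [decoderLetterKernel]
  rw [sum_comm]
  simp [(τ m2).sum_one]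

theorem jointSL_eq_chainLaw (PU : FDist U) (σ : (Fin n → U) → FDist (Msg n R1))
    (μ : Msg n R1 → FDist (Msg n R2)) (τ : Msg n R2 → FDist (Fin n → V)) :
    jointSL PU σ μ τ
      = chainLaw (fun u w1 => (n : ℝ)⁻¹ * encoderLetterLaw PU σ w1.2 u w1.1)
          (relayKernel μ) (fun w2 v => decoderLetterKernel τ w2.2 w2.1 v) := by
  funext u w1 w2 v
  simp only [jointSL, chainLaw, jointN, encoderLetterLaw, relayKernel, decoderLetterKernel,
    mul_sum, sum_mul]
  conv_rhs => rw [sum_comm]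
  refine sum_congr rfl fun un _ => sum_congr rfl fun vn _ => ?_
  by_cases ht : w2.2 = w1.2
  · split_ifs <;> simp_all
    ring
  · simp [ht]

theorem margU_eq (PU : FDist U) (σ : (Fin n → U) → FDist (Msg n R1))
    (μ : Msg n R1 → FDist (Msg n R2)) (τ : Msg n R2 → FDist (Fin n → V)) (hn : n ≠ 0)
    (u : U) :
    margU PU σ μ τ u = PU.p u := by
  rw [margU, jointSL_eq_chainLaw, chainLaw_marginal₁ (sum_relayKernel μ)
    (fun w2 => sum_decoderLetterKernel τ w2.2 w2.1), Fintype.sum_prod_type_right]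
  simp only [← mul_sum, sum_encoderLetterLaw, sum_const, card_univ, Fintype.card_fin,
    nsmul_eq_mul]
  field_simp

end Cascade

theorem cascade_singleletter_factorization_general
    {U V : Type} [Fintype U] [DecidableEq U]
    [Fintype V] [DecidableEq V]
    {n : ℕ} {R1 R2 : ℝ} (PU : FDist U)
    (σ : (Fin n → U) → FDist (Msg n R1))
    (μ : Msg n R1 → FDist (Msg n R2))
    (τ : Msg n R2 → FDist (Fin n → V)) :
    ∀ (u : U) (w1 : Msg n R1 × Fin n) (w2 : Msg n R2 × Fin n) (v : V),
      margU PU σ μ τ u ≠ 0 → margW1 PU σ μ τ w1 ≠ 0 → margW2 PU σ μ τ w2 ≠ 0 →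
        jointSL PU σ μ τ u w1 w2 v
          = PU.p u * (margUW1 PU σ μ τ u w1 / margU PU σ μ τ u)
              * (margW1W2 PU σ μ τ w1 w2 / margW1 PU σ μ τ w1)
              * (margW2V PU σ μ τ w2 v / margW2 PU σ μ τ w2) := by
  intro u w1 w2 v hU hW1 hW2
  rw [← margU_eq PU σ μ τ w1.2.pos.ne' u]
  simp only [margU, margW1, margW2, margUW1, margW1W2, margW2V, jointSL_eq_chainLaw] at *
  exact chainLaw_eq_marginal_mul_cond (sum_relayKernel μ)
    (fun w2 => sum_decoderLetterKernel τ w2.2 w2.1) u w1 w2 v hU hW1 hW2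

/-- **Factorization of the induced single-letter law.** For `n ≥ 1` and
strategies `(σ,μ,τ)`, with `U = U_T`, `W₁ = (M₁,T)`, `W₂ = (M₂,T)`, `V = V_T`,
the joint law factorizes as
`P^{σμτ}_{U W₁ W₂ V} = P_U · P^σ_{W₁|U} · P^μ_{W₂|W₁} · P^τ_{V|W₂}`: for every
`(u,w₁,w₂,v)` at which the conditionals (induced by the joint law itself) are
defined, `P(u,w₁,w₂,v) = P_U(u)·P(w₁|u)·P(w₂|w₁)·P(v|w₂)`. -/
theorem cascade_singleletter_factorization
    {U V : Type} [Fintype U] [DecidableEq U] [Nonempty U]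
    [Fintype V] [DecidableEq V] [Nonempty V]
    {n : ℕ} (hn : 1 ≤ n) {R1 R2 : ℝ} (PU : FDist U)
    (σ : (Fin n → U) → FDist (Msg n R1))
    (μ : Msg n R1 → FDist (Msg n R2))
    (τ : Msg n R2 → FDist (Fin n → V)) :
    ∀ (u : U) (w1 : Msg n R1 × Fin n) (w2 : Msg n R2 × Fin n) (v : V),
      margU PU σ μ τ u ≠ 0 → margW1 PU σ μ τ w1 ≠ 0 → margW2 PU σ μ τ w2 ≠ 0 →
        jointSL PU σ μ τ u w1 w2 v
          = PU.p u * (margUW1 PU σ μ τ u w1 / margU PU σ μ τ u)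
              * (margW1W2 PU σ μ τ w1 w2 / margW1 PU σ μ τ w1)
              * (margW2V PU σ μ τ w2 v / margW2 PU σ μ τ w2) :=
  cascade_singleletter_factorization_general PU σ μ τ
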